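/- arXiv:0804.0481 — 5 statements merged into one kernel-verified Lean document; each statement's English description precedes it below -/
import Mathlib

section
/- Let G be a finite group with generating set S acting unitarily and irreducibly on V = ℂⁿ via ρ, and suppose κ > 0 is such that for every traceless operator 0 ≠ T ∈ 𝔰𝔩ₙ(ℂ) there exists s ∈ S with ‖ρ(s)Tρ(s)⁻¹ - T‖ ≥ κ‖T‖ (Hilbert–Schmidt norm). Then for every subspace W ≤ V with dim W ≤ n/2, dim(W + Σ_{s∈S} ρ(s)W) ≥ (1 + κ²/12)·dim W. -/
open Module Matrix

/-!
Let `P` be the orthogonal projection onto `W`, `d = dim W`, and `T = P - (d/n)·1` its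
traceless part, so that `‖T‖² = d (1 - d/n) ≥ d/2`. For a unitary `u`, `u T u⁻¹ - T = Q - P`
where `Q` projects onto `uW`, and `‖Q - P‖² = 2d - 2 re tr (PQ) ≤ 2 (dim (W + uW) - d)`
because `tr (PQ) ≥ dim (W ∩ uW)`. Taking `u = ρ s` with `‖u T u⁻¹ - T‖ ≥ κ ‖T‖` gives
`dim (W + uW) ≥ (1 + κ²/4) d`.
-/

namespace Matrix

variable {ι : Type*} [Fintype ι]

open scoped ComplexOrder in
theorem re_trace_mul_conjTranspose_nonneg (A : Matrix ι ι ℂ) :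
    0 ≤ (A * Aᴴ).trace.re :=
  (Complex.nonneg_iff.mp (posSemidef_self_mul_conjTranspose A).trace_nonneg).1

structure IsOrthogonalProjection (P : Matrix ι ι ℂ) (W : Submodule ℂ (ι → ℂ)) : Prop where
  isHermitian : P.IsHermitian
  isProj : LinearMap.IsProj W P.mulVecLin

theorem IsOrthogonalProjection.mulVec_mem {P : Matrix ι ι ℂ} {W : Submodule ℂ (ι → ℂ)}
    (hP : IsOrthogonalProjection P W) (x : ι → ℂ) : P *ᵥ x ∈ W :=
  hP.isProj.map_mem x

theorem IsOrthogonalProjection.mulVec_of_mem {P : Matrix ι ι ℂ} {W : Submodule ℂ (ι → ℂ)}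
    (hP : IsOrthogonalProjection P W) {x : ι → ℂ} (hx : x ∈ W) : P *ᵥ x = x :=
  hP.isProj.map_id x hx

variable [DecidableEq ι]

theorem exists_isOrthogonalProjection (W : Submodule ℂ (ι → ℂ)) :
    ∃ P : Matrix ι ι ℂ, IsOrthogonalProjection P W := by
  let K : Submodule ℂ (EuclideanSpace ℂ ι) :=
    W.comap (WithLp.linearEquiv 2 ℂ (ι → ℂ)).toLinearMap
  have hK (v : EuclideanSpace ℂ ι) : v ∈ K ↔ v.ofLp ∈ W := Iff.rfl
  have hmulVec (x : ι → ℂ) :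
      toEuclideanLin.symm K.starProjection *ᵥ x = (K.starProjection (WithLp.toLp 2 x)).ofLp := by
    calc _ = (toEuclideanLin (toEuclideanLin.symm K.starProjection.toLinearMap)
          (WithLp.toLp 2 x)).ofLp := rfl
      _ = _ := by rw [LinearEquiv.apply_symm_apply]; rfl
  refine ⟨toEuclideanLin.symm K.starProjection, ?_, ?_, ?_⟩
  · rw [← isSymmetric_toEuclideanLin_iff, LinearEquiv.apply_symm_apply]
    exact K.starProjection_isSymmetric
  · intro x
    rw [mulVecLin_apply, hmulVec, ← hK]
    exact K.starProjection_apply_mem _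
  · intro x hx
    rw [mulVecLin_apply, hmulVec, K.starProjection_eq_self_iff.mpr ((hK _).mpr hx)]

namespace IsOrthogonalProjection

variable {P Q R : Matrix ι ι ℂ} {U W W' : Submodule ℂ (ι → ℂ)}

theorem mul_of_le (hP : IsOrthogonalProjection P W) (hR : IsOrthogonalProjection R U)
    (hUW : U ≤ W) : P * R = R :=
  ext_of_mulVec_single fun j => by
    rw [← mulVec_mulVec, hP.mulVec_of_mem (hUW (hR.mulVec_mem _))]

theorem mul_self (hP : IsOrthogonalProjection P W) : P * P = P :=
  hP.mul_of_le hP le_rfl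

theorem trace_eq (hP : IsOrthogonalProjection P W) : P.trace = finrank ℂ W := by
  rw [← hP.isProj.trace, ← toLin'_apply', trace_toLin'_eq]

theorem conj_unitary (hP : IsOrthogonalProjection P W) {u : Matrix ι ι ℂ}
    (hu : u ∈ unitaryGroup ι ℂ) :
    IsOrthogonalProjection (u * P * star u) (W.map u.mulVecLin) where
  isHermitian := by
    rw [star_eq_conjTranspose]
    exact isHermitian_mul_mul_conjTranspose u hP.isHermitian
  isProj.map_mem x := ⟨P *ᵥ star u *ᵥ x, hP.mulVec_mem _, by simp [mulVec_mulVec, mul_assoc]⟩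
  isProj.map_id := by
    rintro _ ⟨w, hw, rfl⟩
    simp only [mulVecLin_apply, mulVec_mulVec, mul_assoc, Unitary.star_mul_self_of_mem hu,
      mul_one]
    rw [← mulVec_mulVec, hP.mulVec_of_mem hw]

theorem finrank_inf_le_re_trace_mul (hP : IsOrthogonalProjection P W)
    (hQ : IsOrthogonalProjection Q W') :
    (finrank ℂ ↥(W ⊓ W') : ℝ) ≤ (P * Q).trace.re := by
  obtain ⟨R, hR⟩ := exists_isOrthogonalProjection (W ⊓ W')
  have hPQR : P * Q * R = R := by
    rw [mul_assoc, hQ.mul_of_le hR inf_le_right, hP.mul_of_le hR inf_le_left]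
  have hRPQ : R * (P * Q)ᴴ = R := by
    simpa [hR.isHermitian.eq] using congrArg conjTranspose hPQR
  -- `tr (PQ) - dim (W ⊓ W') = ‖PQ - R‖² ≥ 0`
  have hgram : (P * Q - R) * (P * Q - R)ᴴ = P * Q * (P * Q)ᴴ - R := by
    rw [conjTranspose_sub, hR.isHermitian.eq, sub_mul, mul_sub, mul_sub, hPQR, hRPQ, hR.mul_self]
    abel
  have htrace : (P * Q * (P * Q)ᴴ).trace = (P * Q).trace := by
    rw [conjTranspose_mul, hP.isHermitian.eq, hQ.isHermitian.eq, mul_assoc P Q, ← mul_assoc Q Q,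
      hQ.mul_self, ← mul_assoc, trace_mul_comm, ← mul_assoc, hP.mul_self]
  have := re_trace_mul_conjTranspose_nonneg (P * Q - R)
  rw [hgram, trace_sub, htrace, hR.trace_eq] at this
  simpa using this

theorem re_trace_sub_mul_conjTranspose_le (hP : IsOrthogonalProjection P W)
    (hQ : IsOrthogonalProjection Q W') :
    ((Q - P) * (Q - P)ᴴ).trace.re
      ≤ 2 * (finrank ℂ ↥(W ⊔ W') : ℝ) - finrank ℂ W - finrank ℂ W' := by
  have hdim :
      (finrank ℂ ↥(W ⊔ W') + finrank ℂ ↥(W ⊓ W') : ℝ) = finrank ℂ W + finrank ℂ W' := by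
    exact_mod_cast Submodule.finrank_sup_add_finrank_inf_eq W W'
  have htrace : ((Q - P) * (Q - P)ᴴ).trace.re
      = finrank ℂ W + finrank ℂ W' - 2 * (P * Q).trace.re := by
    rw [conjTranspose_sub, hP.isHermitian.eq, hQ.isHermitian.eq, sub_mul, mul_sub, mul_sub,
      hP.mul_self, hQ.mul_self, trace_sub, trace_sub, trace_sub, hP.trace_eq, hQ.trace_eq,
      trace_mul_comm Q P]
    simp only [Complex.sub_re, Complex.natCast_re]
    ring
  linarith [hP.finrank_inf_le_re_trace_mul hQ]

theorem re_trace_sub_smul_one_mul_conjTranspose (hP : IsOrthogonalProjection P W) (c : ℝ) :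
    ((P - (c : ℂ) • 1) * (P - (c : ℂ) • 1)ᴴ).trace.re
      = (1 - 2 * c) * finrank ℂ W + c ^ 2 * Fintype.card ι := by
  have hsq : (P - (c : ℂ) • 1) * (P - (c : ℂ) • 1)ᴴ
      = P - ((2 * c : ℝ) : ℂ) • P + ((c ^ 2 : ℝ) : ℂ) • 1 := by
    rw [conjTranspose_sub, hP.isHermitian.eq, conjTranspose_smul, conjTranspose_one,
      Complex.star_def, Complex.conj_ofReal, sub_mul, mul_sub, mul_sub, hP.mul_self]
    simp only [mul_smul_comm, smul_mul_assoc, mul_one, one_mul, smul_smul]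
    push_cast
    module
  rw [hsq, trace_add, trace_sub, trace_smul, trace_smul, trace_one, hP.trace_eq]
  simp only [smul_eq_mul, Complex.add_re, Complex.sub_re, Complex.re_ofReal_mul,
    Complex.natCast_re]
  ring

theorem trace_sub_smul_one_eq_zero (hP : IsOrthogonalProjection P W)
    (hι : Fintype.card ι ≠ 0) :
    (P - ((finrank ℂ W / Fintype.card ι : ℝ) : ℂ) • 1).trace = 0 := by
  rw [trace_sub, trace_smul, trace_one, hP.trace_eq, smul_eq_mul]
  push_cast
  rw [div_mul_cancel₀ _ (by exact_mod_cast hι)]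
  exact sub_self _

theorem finrank_div_two_le_re_trace_sub_smul_one_mul_conjTranspose
    (hP : IsOrthogonalProjection P W) (hW : 2 * finrank ℂ W ≤ Fintype.card ι) :
    (finrank ℂ W / 2 : ℝ) ≤ ((P - ((finrank ℂ W / Fintype.card ι : ℝ) : ℂ) • 1)
      * (P - ((finrank ℂ W / Fintype.card ι : ℝ) : ℂ) • 1)ᴴ).trace.re := by
  rcases (Fintype.card ι).eq_zero_or_pos with hι | hι
  · rw [show finrank ℂ W = 0 by omega, Nat.cast_zero, zero_div]
    exact re_trace_mul_conjTranspose_nonneg _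
  rw [hP.re_trace_sub_smul_one_mul_conjTranspose]
  have hW' : (2 * finrank ℂ W : ℝ) ≤ Fintype.card ι := by exact_mod_cast hW
  field_simp
  nlinarith

end IsOrthogonalProjection

theorem unitary_conj_sub_smul_one {u : Matrix ι ι ℂ} (hu : u ∈ unitaryGroup ι ℂ)
    (P : Matrix ι ι ℂ) (c : ℂ) :
    u * (P - c • 1) * star u - (P - c • 1) = u * P * star u - P := by
  rw [mul_sub, sub_mul, mul_smul_comm, mul_one, smul_mul_assoc, Unitary.mul_star_self_of_mem hu]
  abel

theorem finrank_map_mulVecLin_of_mem_unitaryGroup {u : Matrix ι ι ℂ} (hu : u ∈ unitaryGroup ι ℂ)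
    (W : Submodule ℂ (ι → ℂ)) : finrank ℂ ↥(W.map u.mulVecLin) = finrank ℂ W := by
  have hinj : Function.Injective u.mulVecLin :=
    Function.LeftInverse.injective (g := (star u).mulVecLin) fun x => by
      simp [mulVec_mulVec, Unitary.star_mul_self_of_mem hu]
  exact (Submodule.equivMapOfInjective _ hinj W).finrank_eq.symm

end Matrix

theorem dimension_expander_of_adjoint_kazhdan_general
    (G : Type*) [Group G] (S : Finset G) (n : ℕ)
    (ρ : G →* Matrix.unitaryGroup (Fin n) ℂ)
    (κ : ℝ) (hκ : 0 < κ)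
    (hka : ∀ T : Matrix (Fin n) (Fin n) ℂ, T.trace = 0 → T ≠ 0 →
      ∃ s ∈ S,
        Real.sqrt ((((ρ s : Matrix (Fin n) (Fin n) ℂ) * T
              * (((ρ s)⁻¹ : Matrix.unitaryGroup (Fin n) ℂ) : Matrix (Fin n) (Fin n) ℂ) - T)
            * ((ρ s : Matrix (Fin n) (Fin n) ℂ) * T
              * (((ρ s)⁻¹ : Matrix.unitaryGroup (Fin n) ℂ) : Matrix (Fin n) (Fin n) ℂ) - T)ᴴ).trace.re)
          ≥ κ * Real.sqrt ((T * Tᴴ).trace.re)) :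
    ∀ W : Submodule ℂ (Fin n → ℂ), (finrank ℂ W : ℝ) ≤ (n : ℝ) / 2 →
      ((finrank ℂ ↥(W ⊔ ⨆ s ∈ S, W.map ((ρ s : Matrix (Fin n) (Fin n) ℂ)).mulVecLin)) : ℝ)
        ≥ (1 + κ ^ 2 / 12) * finrank ℂ W := by
  intro W hW
  set d := finrank ℂ W
  rcases Nat.eq_zero_or_pos d with hd | hd
  · simp [hd]
  have hW' : 2 * d ≤ Fintype.card (Fin n) := by
    rw [Fintype.card_fin]
    exact_mod_cast (by linarith : (2 * d : ℝ) ≤ n)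
  obtain ⟨P, hP⟩ := exists_isOrthogonalProjection W
  set T := P - ((d / Fintype.card (Fin n) : ℝ) : ℂ) • 1
  have hT : (d / 2 : ℝ) ≤ (T * Tᴴ).trace.re :=
    hP.finrank_div_two_le_re_trace_sub_smul_one_mul_conjTranspose hW'
  have hT0 : T ≠ 0 := fun h => by
    simp [h] at hT
    linarith [(Nat.cast_pos.mpr hd : (0 : ℝ) < d)]
  obtain ⟨s, hs, hmove⟩ := hka T (hP.trace_sub_smul_one_eq_zero (by omega)) hT0
  set u : Matrix (Fin n) (Fin n) ℂ := (ρ s : Matrix (Fin n) (Fin n) ℂ)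
  have hu : u ∈ unitaryGroup (Fin n) ℂ := (ρ s).2
  have hconj : u * T * star u - T = u * P * star u - P := unitary_conj_sub_smul_one hu P _
  rw [← Unitary.star_eq_inv, Unitary.coe_star, hconj, ge_iff_le,
    Real.le_sqrt (by positivity) (re_trace_mul_conjTranspose_nonneg _), mul_pow,
    Real.sq_sqrt (re_trace_mul_conjTranspose_nonneg _)] at hmove
  have hgap := hP.re_trace_sub_mul_conjTranspose_le (hP.conj_unitary hu)
  rw [finrank_map_mulVecLin_of_mem_unitaryGroup hu] at hgap
  have hsup : (finrank ℂ ↥(W ⊔ W.map u.mulVecLin) : ℝ)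
      ≤ finrank ℂ ↥(W ⊔ ⨆ s ∈ S, W.map ((ρ s : Matrix (Fin n) (Fin n) ℂ)).mulVecLin) := by
    exact_mod_cast Submodule.finrank_mono <| sup_le_sup_left
      (le_biSup (fun g => W.map ((ρ g : Matrix (Fin n) (Fin n) ℂ)).mulVecLin) hs) W
  nlinarith [mul_le_mul_of_nonneg_left hT (sq_nonneg κ)]

/-- If `ρ : G → U(n)` is an irreducible unitary representation, `S ⊆ G` finite, and
`κ > 0` is such that for every nonzero traceless matrix `T` some `s ∈ S` moves `T`
by at least `κ‖T‖` in the Hilbert–Schmidt norm under the adjoint action, then `ℂⁿ`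
is a `(κ²/12)`-dimension expander for `{ρ(s)}_{s ∈ S}`. -/
theorem dimension_expander_of_adjoint_kazhdan
    (G : Type*) [Group G] (S : Finset G) (n : ℕ) (hn : 0 < n)
    (ρ : G →* Matrix.unitaryGroup (Fin n) ℂ)
    (hirred : ∀ U : Submodule ℂ (Fin n → ℂ),
      (∀ g : G, U.map ((ρ g : Matrix (Fin n) (Fin n) ℂ)).mulVecLin ≤ U) → U = ⊥ ∨ U = ⊤)
    (κ : ℝ) (hκ : 0 < κ)
    (hka : ∀ T : Matrix (Fin n) (Fin n) ℂ, T.trace = 0 → T ≠ 0 →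
      ∃ s ∈ S,
        Real.sqrt ((((ρ s : Matrix (Fin n) (Fin n) ℂ) * T
              * (((ρ s)⁻¹ : Matrix.unitaryGroup (Fin n) ℂ) : Matrix (Fin n) (Fin n) ℂ) - T)
            * ((ρ s : Matrix (Fin n) (Fin n) ℂ) * T
              * (((ρ s)⁻¹ : Matrix.unitaryGroup (Fin n) ℂ) : Matrix (Fin n) (Fin n) ℂ) - T)ᴴ).trace.re)
          ≥ κ * Real.sqrt ((T * Tᴴ).trace.re)) :
    ∀ W : Submodule ℂ (Fin n → ℂ), (finrank ℂ W : ℝ) ≤ (n : ℝ) / 2 →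
      ((finrank ℂ ↥(W ⊔ ⨆ s ∈ S, W.map ((ρ s : Matrix (Fin n) (Fin n) ℂ)).mulVecLin)) : ℝ)
        ≥ (1 + κ ^ 2 / 12) * finrank ℂ W :=
  dimension_expander_of_adjoint_kazhdan_general G S n ρ κ hκ hka
end

section
/- Let F ⊆ K be a field extension, T₁,…,T_k ∈ GLₙ(F) ⊆ GLₙ(K), and let W be an F-subspace of Fⁿ with K-span W̄ ⊆ Kⁿ. Then dim_F(W + Σᵢ TᵢW) = dim_K(W̄ + Σᵢ TᵢW̄). Consequently, if (Kⁿ, {Tᵢ}) is an ε-dimension expander then so is (Fⁿ, {Tᵢ}). -/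
/-!
`F`-linearly independent vectors of `Fⁿ` stay `K`-linearly independent in `Kⁿ` (`K` is flat
over `F`), so a basis of `W` becomes a basis of `W̄` and `dim_K W̄ = dim_F W`. Taking `K`-spans
is left adjoint to pulling back along `Fⁿ → Kⁿ`, hence commutes with sums of subspaces, and it
commutes with the matrices `Tᵢ` since they have entries in `F`. So `W + Σᵢ TᵢW` has `K`-span
`W̄ + Σᵢ TᵢW̄`, of the same dimension, and a witness `W` against expansion over `F` gives the
witness `W̄` over `K`.
-/

open Module

/-- `(Fⁿ, {Tᵢ})` is an `ε`-dimension expander. -/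
def IsDimensionExpander (F : Type*) [Field F] (n k : ℕ)
    (T : Fin k → Matrix (Fin n) (Fin n) F) (ε : ℝ) : Prop :=
  ∀ W : Submodule F (Fin n → F), (finrank F W : ℝ) ≤ (n : ℝ) / 2 →
    ((finrank F ↥(W ⊔ ⨆ i, W.map (T i).mulVecLin)) : ℝ) ≥ (1 + ε) * finrank F W

/-- The `K`-span in `Kⁿ` of an `F`-subspace `W ⊆ Fⁿ`, for a field extension `F ⊆ K`. -/
def kSpan (F K : Type*) [Field F] [Field K] [Algebra F K] (n : ℕ)
    (W : Submodule F (Fin n → F)) : Submodule K (Fin n → K) :=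
  Submodule.span K ((fun v (i : Fin n) => algebraMap F K (v i)) '' (W : Set (Fin n → F)))

theorem LinearIndependent.map_algebraMap {R S : Type*} [CommRing R] [CommRing S] [Algebra R S]
    [Module.Flat R S] {ι κ : Type*} [Finite κ] {v : ι → κ → R} (hv : LinearIndependent R v) :
    LinearIndependent S fun i j => algebraMap R S (v i j) := by
  have := Fintype.ofFinite κ
  classical
  have hv' : LinearIndependent S fun i => (1 : S) ⊗ₜ[R] v i :=
    Module.Flat.linearIndependent_one_tmul hv
  have h : (fun i j => algebraMap R S (v i j)) =
      TensorProduct.piScalarRight R S S κ ∘ fun i => (1 : S) ⊗ₜ[R] v i := by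
    ext i j
    simp [Algebra.algebraMap_eq_smul_one]
  rw [h]
  exact hv'.map' (TensorProduct.piScalarRight R S S κ).toLinearMap
    (TensorProduct.piScalarRight R S S κ).ker

section kSpan

variable (F K : Type*) [Field F] [Field K] [Algebra F K] (n : ℕ)

theorem kSpan_eq_span_map (W : Submodule F (Fin n → F)) :
    kSpan F K n W = Submodule.span K (W.map ((Algebra.linearMap F K).compLeft (Fin n))) :=
  rfl

theorem kSpan_span (s : Set (Fin n → F)) :
    kSpan F K n (Submodule.span F s) =
      Submodule.span K ((Algebra.linearMap F K).compLeft (Fin n) '' s) := by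
  rw [kSpan_eq_span_map, Submodule.map_span, Submodule.span_span_of_tower]

theorem gc_kSpan : GaloisConnection (kSpan F K n) fun U : Submodule K (Fin n → K) =>
    (U.restrictScalars F).comap ((Algebra.linearMap F K).compLeft (Fin n)) :=
  fun W U => by rw [kSpan, Submodule.span_le, Set.image_subset_iff]; rfl

theorem kSpan_map_mulVecLin (M : Matrix (Fin n) (Fin n) F) (W : Submodule F (Fin n → F)) :
    kSpan F K n (W.map M.mulVecLin) = (kSpan F K n W).map (M.map (algebraMap F K)).mulVecLin := by
  rw [kSpan_eq_span_map, kSpan_eq_span_map, Submodule.map_span, Submodule.map_coe,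
    Submodule.map_coe, Submodule.map_coe, ← Set.image_comp, ← Set.image_comp]
  congr 2
  ext v j
  exact RingHom.map_mulVec (algebraMap F K) M v j

theorem finrank_kSpan (W : Submodule F (Fin n → F)) :
    finrank K (kSpan F K n W) = finrank F W := by
  let b := Module.finBasis F W
  have hspan : W = Submodule.span F (Set.range (W.subtype ∘ b)) := by
    rw [Set.range_comp, ← Submodule.map_span, b.span_eq, Submodule.map_top,
      Submodule.range_subtype]
  have hli := (b.linearIndependent.map' W.subtype W.ker_subtype).map_algebraMap (S := K)
  conv_lhs => rw [hspan, kSpan_span, ← Set.range_comp]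
  exact (finrank_span_eq_card hli).trans (Fintype.card_fin _)

theorem kSpan_sup_iSup_map {ι : Type*} (T : ι → Matrix (Fin n) (Fin n) F)
    (W : Submodule F (Fin n → F)) :
    kSpan F K n (W ⊔ ⨆ i, W.map (T i).mulVecLin) =
      kSpan F K n W ⊔ ⨆ i, (kSpan F K n W).map ((T i).map (algebraMap F K)).mulVecLin := by
  simp only [(gc_kSpan F K n).l_sup, (gc_kSpan F K n).l_iSup, kSpan_map_mulVecLin]

theorem finrank_sup_iSup_map_eq_finrank_kSpan {ι : Type*} (T : ι → Matrix (Fin n) (Fin n) F)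
    (W : Submodule F (Fin n → F)) :
    finrank F ↥(W ⊔ ⨆ i, W.map (T i).mulVecLin) =
      finrank K ↥(kSpan F K n W ⊔ ⨆ i,
        (kSpan F K n W).map ((T i).map (algebraMap F K)).mulVecLin) := by
  rw [← kSpan_sup_iSup_map, finrank_kSpan]

end kSpan

/-- For a field extension `F ⊆ K` and matrices `Tᵢ` over `F`, the dimension of
`W + Σᵢ TᵢW` over `F` equals the dimension of `W̄ + Σᵢ TᵢW̄` over `K`, where `W̄` is the
`K`-span of `W`; consequently if `(Kⁿ, {Tᵢ})` is an `ε`-dimension expander then so is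
`(Fⁿ, {Tᵢ})`. -/
theorem dimension_expander_descends_along_field_extension
    (F K : Type*) [Field F] [Field K] [Algebra F K] (n k : ℕ)
    (T : Fin k → Matrix (Fin n) (Fin n) F) (ε : ℝ) :
    (∀ W : Submodule F (Fin n → F),
      finrank F ↥(W ⊔ ⨆ i, W.map (T i).mulVecLin)
        = finrank K ↥(kSpan F K n W ⊔ ⨆ i,
            (kSpan F K n W).map ((T i).map (algebraMap F K)).mulVecLin)) ∧
    (IsDimensionExpander K n k (fun i => (T i).map (algebraMap F K)) ε →
      IsDimensionExpander F n k T ε) := by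
  have hdim := finrank_sup_iSup_map_eq_finrank_kSpan F K n T
  refine ⟨hdim, fun hK W hW => ?_⟩
  have hW' : (finrank K (kSpan F K n W) : ℝ) ≤ n / 2 := by rwa [finrank_kSpan]
  simpa only [hdim, finrank_kSpan] using hK (kSpan F K n W) hW'
end

section
/- The polynomial algebra F[x] over a field F does not have property τ with respect to the generating set {x}, provided F admits finite field extensions of arbitrarily large degree. Precisely: for every ε > 0 there exist an irreducible polynomial f ∈ F[x] of some degree n and a subspace W of the F-algebra F[x]/(f) with dim W ≤ n/2 and dim(W + x·W) < (1+ε)·dim W. -/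
open Module Polynomial

/-! With `α` a root of an irreducible `f` of degree `n ≥ 2m`, the span `W` of `1, α, …, α^(m-1)`
in `F[x]/(f)` has dimension `m ≤ n/2`, while `W + αW` lies in the span of `1, …, α^m`, of
dimension `m + 1`. The expansion ratio `(m + 1)/m` tends to `1`, so no `ε` works. -/

section SpanPowLT

variable (F : Type*) {A : Type*} [Field F] [Ring A] [Algebra F A]

def spanPowLT (a : A) (m : ℕ) : Submodule F A :=
  Submodule.span F (Set.range fun i : Fin m => a ^ (i : ℕ))

instance (a : A) (m : ℕ) : FiniteDimensional F (spanPowLT F a m) :=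
  FiniteDimensional.span_of_finite F (Set.finite_range _)

variable {F}

theorem spanPowLT_le_succ (a : A) (m : ℕ) : spanPowLT F a m ≤ spanPowLT F a (m + 1) :=
  Submodule.span_mono <| by
    rintro _ ⟨i, rfl⟩
    exact ⟨i.castSucc, rfl⟩

theorem map_mulLeft_spanPowLT_le (a : A) (m : ℕ) :
    (spanPowLT F a m).map (LinearMap.mulLeft F a) ≤ spanPowLT F a (m + 1) := by
  rw [spanPowLT, Submodule.map_span]
  refine Submodule.span_mono ?_
  rintro _ ⟨_, ⟨i, rfl⟩, rfl⟩
  exact ⟨i.succ, pow_succ' a i⟩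

theorem finrank_spanPowLT_le (a : A) (m : ℕ) : finrank F (spanPowLT F a m) ≤ m :=
  (finrank_range_le_card _).trans (Fintype.card_fin m).le

theorem finrank_spanPowLT_of_le_natDegree_minpoly {a : A} {m : ℕ}
    (hm : m ≤ (minpoly F a).natDegree) : finrank F (spanPowLT F a m) = m := by
  have hli : LinearIndependent F fun i : Fin m => a ^ (i : ℕ) :=
    (linearIndependent_pow a).comp (Fin.castLE hm) (Fin.castLE_injective hm)
  rw [spanPowLT, finrank_span_eq_card hli, Fintype.card_fin]

theorem finrank_spanPowLT_sup_map_mulLeft_le (a : A) (m : ℕ) :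
    finrank F ↥(spanPowLT F a m ⊔ (spanPowLT F a m).map (LinearMap.mulLeft F a)) ≤ m + 1 :=
  (Submodule.finrank_mono (sup_le (spanPowLT_le_succ a m) (map_mulLeft_spanPowLT_le a m))).trans
    (finrank_spanPowLT_le a (m + 1))

end SpanPowLT

theorem AdjoinRoot.natDegree_minpoly_root {K : Type*} [Field K] {f : K[X]} (hf : f ≠ 0) :
    (minpoly K (root f)).natDegree = f.natDegree := by
  rw [minpoly_root hf, natDegree_mul_C (inv_ne_zero (leadingCoeff_ne_zero.mpr hf))]

/-- If `F` admits irreducible polynomials of arbitrarily large degree, then the algebra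
`F[x]` does not have property τ with respect to `{x}`: for every `ε > 0` there is an
irreducible `f` of some degree `n` and a subspace `W` of `F[x]/(f)` with
`dim W ≤ n/2` and `dim(W + x·W) < (1+ε)·dim W`. -/
theorem polynomial_algebra_not_tau
    (F : Type*) [Field F]
    (hF : ∀ N : ℕ, ∃ f : F[X], Irreducible f ∧ N ≤ f.natDegree) :
    ∀ ε : ℝ, 0 < ε →
      ∃ f : F[X], Irreducible f ∧
        ∃ W : Submodule F (F[X] ⧸ Ideal.span {f}),
          (finrank F W : ℝ) ≤ (f.natDegree : ℝ) / 2 ∧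
          ((finrank F ↥(W ⊔ W.map
              (LinearMap.mulLeft F (Ideal.Quotient.mk (Ideal.span {f}) X)))) : ℝ)
            < (1 + ε) * finrank F W := by
  intro ε hε
  obtain ⟨m, hm⟩ := exists_nat_gt ε⁻¹
  obtain ⟨f, hf, hdeg⟩ := hF (2 * m)
  set α := Ideal.Quotient.mk (Ideal.span {f}) X
  have hdim : finrank F (spanPowLT F α m) = m :=
    finrank_spanPowLT_of_le_natDegree_minpoly <| by
      rw [show minpoly F α = minpoly F (AdjoinRoot.root f) from rfl,
        AdjoinRoot.natDegree_minpoly_root hf.ne_zero]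
      omega
  refine ⟨f, hf, spanPowLT F α m, ?_, ?_⟩
  · have : (2 * m : ℝ) ≤ f.natDegree := by exact_mod_cast hdeg
    rw [hdim]
    linarith
  · have hεm : 1 < ε * m := by rwa [inv_lt_iff_one_lt_mul₀' hε] at hm
    calc _ ≤ (m : ℝ) + 1 := by exact_mod_cast finrank_spanPowLT_sup_map_mulLeft_le α m
      _ < (1 + ε) * finrank F (spanPowLT F α m) := by
        rw [hdim]
        linarith
end

section
/- The free algebra F⟨x,y⟩ on two generators over a field F does not have property τ: for every ε > 0 there exist n, two matrices a, b generating Mₙ(F) as an F-algebra, and a subspace W ⊆ Fⁿ with dim W ≤ n/2 and dim(W + aW + bW) < (1+ε)dim W. -/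
/-!
The shift `a : eⱼ ↦ eⱼ₋₁` and the rank-one matrix `b = E_{n-1,0}` generate `Mₙ(F)`: multiplying
`b` by powers of `a` on either side produces every matrix unit. But `a` leaves the span `W` of
`e₀, …, e_{k-1}` invariant, and `b` has rank one, so `dim (W + aW + bW) ≤ dim W + 1`. Taking
`n = 2k` with `k > 1/ε` gives expansion `1 + 1/k < 1 + ε`.
-/

open Module Matrix

theorem Subalgebra.eq_top_of_single_mem {R ι : Type*} [CommSemiring R] [Fintype ι]
    [DecidableEq ι] (A : Subalgebra R (Matrix ι ι R)) (h : ∀ i j, single i j (1 : R) ∈ A) :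
    A = ⊤ := by
  refine eq_top_iff.2 fun M _ => Matrix.induction_on' M A.zero_mem (fun _ _ => A.add_mem)
    fun i j x => ?_
  simpa [smul_single] using A.smul_mem (h i j) x

theorem Submodule.finrank_sup_map_le {K V : Type*} [DivisionRing K] [AddCommGroup V]
    [Module K V] [FiniteDimensional K V] (W : Submodule K V) {f g : V →ₗ[K] V}
    (hf : W.map f ≤ W) :
    finrank K ↥(W ⊔ W.map f ⊔ W.map g) ≤ finrank K W + finrank K (LinearMap.range g) := by
  rw [sup_eq_left.2 hf]
  calc finrank K ↥(W ⊔ W.map g) ≤ finrank K ↥(W ⊔ LinearMap.range g) :=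
        Submodule.finrank_mono (sup_le_sup_left (LinearMap.map_le_range) W)
    _ ≤ _ := Submodule.finrank_add_le_finrank_add_finrank _ _

theorem Matrix.finrank_range_single_mulVecLin_le_one {K ι : Type*} [Field K] [Fintype ι]
    [DecidableEq ι] (i j : ι) (c : K) :
    finrank K (LinearMap.range (single i j c).mulVecLin) ≤ 1 := by
  have hle : LinearMap.range (single i j c).mulVecLin ≤ K ∙ Pi.single i 1 := by
    rintro _ ⟨w, rfl⟩
    rw [mulVecLin_apply, single_mulVec_eq]
    exact Submodule.smul_mem _ _ (Submodule.mem_span_singleton_self _)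
  exact (Submodule.finrank_mono hle).trans (by simpa using finrank_span_le_card ({Pi.single i 1} : Set (ι → K)))

namespace Matrix

variable {R : Type*} {m : ℕ}

/-- The nilpotent shift `eⱼ ↦ eⱼ₋₁`, `e₀ ↦ 0`. -/
def shift (m : ℕ) (R : Type*) [Semiring R] : Matrix (Fin (m + 1)) (Fin (m + 1)) R :=
  ∑ i : Fin m, single i.castSucc i.succ 1

section Semiring

variable [Semiring R]

theorem shift_mul_single_succ (i : Fin m) (j : Fin (m + 1)) (c : R) :
    shift m R * single i.succ j c = single i.castSucc j c := by
  rw [shift, Finset.sum_mul, Finset.sum_eq_single i]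
  · rw [single_mul_single_same, one_mul]
  · exact fun l _ hl => single_mul_single_of_ne (h := Fin.succ_injective _ |>.ne hl) ..
  · simp

theorem single_castSucc_mul_shift (i : Fin (m + 1)) (j : Fin m) (c : R) :
    single i j.castSucc c * shift m R = single i j.succ c := by
  rw [shift, Finset.mul_sum, Finset.sum_eq_single j]
  · rw [single_mul_single_same, mul_one]
  · exact fun l _ hl => single_mul_single_of_ne (h := Fin.castSucc_injective _ |>.ne hl.symm) ..
  · simp

end Semiring

theorem adjoin_shift_single_last_zero [CommSemiring R] :
    Algebra.adjoin R {shift m R, single (Fin.last m) 0 1} = ⊤ := by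
  set A := Algebra.adjoin R {shift m R, single (Fin.last m) 0 (1 : R)}
  have hshift : shift m R ∈ A := Algebra.subset_adjoin (by simp)
  have hfirst_col : ∀ i, single i 0 (1 : R) ∈ A := by
    refine fun i => Fin.reverseInduction (Algebra.subset_adjoin (by simp)) (fun i hi => ?_) i
    rw [← shift_mul_single_succ]
    exact A.mul_mem hshift hi
  refine A.eq_top_of_single_mem fun i j => Fin.induction (hfirst_col i) (fun j hj => ?_) j
  rw [← single_castSucc_mul_shift]
  exact A.mul_mem hj hshift

end Matrix

def initialSpan (R : Type*) [Semiring R] {d n : ℕ} (h : d ≤ n) : Submodule R (Fin n → R) :=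
  Submodule.span R (Set.range (Pi.basisFun R (Fin n) ∘ Fin.castLE h))

theorem finrank_initialSpan (K : Type*) [Field K] {d n : ℕ} (h : d ≤ n) :
    finrank K (initialSpan K h) = d := by
  rw [initialSpan, finrank_span_eq_card, Fintype.card_fin]
  exact (Pi.basisFun K (Fin n)).linearIndependent.comp _ (Fin.castLE_injective h)

theorem single_mem_initialSpan {R : Type*} [Semiring R] {d n : ℕ} (h : d ≤ n) {j : Fin n}
    (hj : (j : ℕ) < d) : Pi.single j 1 ∈ initialSpan R h :=
  Submodule.subset_span ⟨⟨j, hj⟩, by simp⟩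

theorem map_shift_initialSpan_le {R : Type*} [CommSemiring R] {d m : ℕ} (h : d ≤ m + 1) :
    (initialSpan R h).map (shift m R).mulVecLin ≤ initialSpan R h := by
  rw [initialSpan, Submodule.map_span_le]
  rintro _ ⟨i, rfl⟩
  simp only [Function.comp_apply, Pi.basisFun_apply, mulVecLin_apply, shift, sum_mulVec,
    single_mulVec_eq]
  refine Submodule.sum_mem _ fun l _ => ?_
  by_cases hl : l.succ = Fin.castLE h i
  · refine Submodule.smul_mem _ _ (single_mem_initialSpan h ?_)
    have := congrArg Fin.val hl
    simp only [Fin.val_succ, Fin.val_castLE] at this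
    simp only [Fin.val_castSucc]
    omega
  · simp [hl]

/-- The free algebra `F⟨x,y⟩` does not have property τ: for every `ε > 0` there are
`n`, matrices `a, b` generating `Mₙ(F)` as an `F`-algebra, and a subspace `W ⊆ Fⁿ`
with `dim W ≤ n/2` and `dim(W + aW + bW) < (1+ε)·dim W`. -/
theorem free_algebra_not_tau
    (F : Type*) [Field F] :
    ∀ ε : ℝ, 0 < ε →
      ∃ (n : ℕ) (a b : Matrix (Fin n) (Fin n) F),
        Algebra.adjoin F ({a, b} : Set (Matrix (Fin n) (Fin n) F)) = ⊤ ∧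
        ∃ W : Submodule F (Fin n → F),
          (finrank F W : ℝ) ≤ (n : ℝ) / 2 ∧
          ((finrank F ↥(W ⊔ W.map a.mulVecLin ⊔ W.map b.mulVecLin)) : ℝ)
            < (1 + ε) * finrank F W := by
  intro ε hε
  obtain ⟨k, hk⟩ := exists_nat_gt ε⁻¹
  have hεk : 1 < ε * (k + 1 : ℕ) := by
    rw [← inv_lt_iff_one_lt_mul₀' hε]
    push_cast
    linarith
  have hkm : k + 1 ≤ 2 * k + 1 + 1 := by omega
  refine ⟨2 * k + 1 + 1, shift (2 * k + 1) F, single (Fin.last _) 0 1,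
    adjoin_shift_single_last_zero, initialSpan F hkm, ?_, ?_⟩
  · rw [finrank_initialSpan]
    push_cast
    linarith
  · have hexp := (initialSpan F hkm).finrank_sup_map_le
      (g := (single (Fin.last (2 * k + 1)) 0 1).mulVecLin) (map_shift_initialSpan_le hkm)
    have hb := finrank_range_single_mulVecLin_le_one (Fin.last (2 * k + 1)) 0 (1 : F)
    rw [finrank_initialSpan] at hexp ⊢
    calc _ ≤ ((k + 1 : ℕ) : ℝ) + 1 := by exact_mod_cast hexp.trans (Nat.add_le_add_left hb _)
      _ < (1 + ε) * (k + 1 : ℕ) := by linarith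
end

section
/- For any field F and n ≥ 2, there exist matrices a, b ∈ Mₙ(F) generating Mₙ(F) as an F-algebra and a subspace W ⊆ Fⁿ with dim W = ⌊n/2⌋ such that dim(W + aW + bW) ≤ dim W + 2. -/
/-!
Take `a` the nilpotent shift `eⱼ ↦ eⱼ₊₁` and `b = aᵀ`. Then `1 - a b` is the matrix unit `E₀₀`,
and multiplying a matrix unit on the left by `a` (on the right by `b`) moves it one row down
(one column right), so every matrix unit lies in the algebra generated by `a` and `b`.
For `W = span(e₀, …, e_{k-1})` with `k = ⌊n/2⌋`, we have `bW ⊆ W` and `aW ⊆ span(e₀, …, eₖ)`,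
so `W + aW + bW` has dimension at most `k + 1`.
-/

open Module Matrix

def shiftMatrix (R : Type*) [Zero R] [One R] (n : ℕ) : Matrix (Fin n) (Fin n) R :=
  of fun i j => if (i : ℕ) = j + 1 then 1 else 0

section Generation

variable {R : Type*} {n : ℕ}

theorem shiftMatrix_mul_single [Semiring R] (i : Fin n) (j : Fin (n + 1)) (c : R) :
    shiftMatrix R (n + 1) * single i.castSucc j c = single i.succ j c := by
  ext k l
  by_cases hl : l = j
  · subst hl
    simp [shiftMatrix, single_apply, Fin.ext_iff, eq_comm]
  · simp [hl, Ne.symm hl]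

theorem single_mul_shiftMatrix_transpose [CommSemiring R] (i : Fin (n + 1)) (j : Fin n) (c : R) :
    single i j.castSucc c * (shiftMatrix R (n + 1))ᵀ = single i j.succ c := by
  rw [← transpose_transpose (single i j.castSucc c * _), transpose_mul, transpose_transpose,
    transpose_single, shiftMatrix_mul_single, transpose_single]

theorem one_sub_shiftMatrix_mul_transpose [Ring R] :
    1 - shiftMatrix R (n + 1) * (shiftMatrix R (n + 1))ᵀ = single 0 0 1 := by
  ext k l
  rw [Matrix.sub_apply, mul_apply]
  cases k using Fin.cases with
  | zero => simp [shiftMatrix, single_apply, one_apply]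
  | succ k =>
    rw [Finset.sum_eq_single k.castSucc]
    · simp only [shiftMatrix, transpose_apply, of_apply, Fin.val_succ, Fin.val_castSucc, ite_true,
        one_mul, single_apply, one_apply]
      split_ifs <;> simp_all [Fin.ext_iff]
    · intro m _ hm
      simp [shiftMatrix, Fin.ext_iff] at hm ⊢
      omega
    · simp

theorem single_one_mem_adjoin_shiftMatrix [CommRing R] (i j : Fin n) :
    single i j (1 : R) ∈ Algebra.adjoin R {shiftMatrix R n, (shiftMatrix R n)ᵀ} := by
  cases n with
  | zero => exact i.elim0
  | succ n =>
  set A := Algebra.adjoin R {shiftMatrix R (n + 1), (shiftMatrix R (n + 1))ᵀ}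
  have hS : shiftMatrix R (n + 1) ∈ A := Algebra.subset_adjoin (by simp)
  have hT : (shiftMatrix R (n + 1))ᵀ ∈ A := Algebra.subset_adjoin (by simp)
  have hcol : ∀ i, single i 0 (1 : R) ∈ A := by
    refine Fin.induction ?_ (fun i hi => ?_)
    · rw [← one_sub_shiftMatrix_mul_transpose]
      exact A.sub_mem A.one_mem (A.mul_mem hS hT)
    · rw [← shiftMatrix_mul_single]
      exact A.mul_mem hS hi
  induction j using Fin.induction with
  | zero => exact hcol i
  | succ j hj =>
    rw [← single_mul_shiftMatrix_transpose]
    exact A.mul_mem hj hT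

theorem adjoin_shiftMatrix_transpose_eq_top (R : Type*) [CommRing R] (n : ℕ) :
    Algebra.adjoin R {shiftMatrix R n, (shiftMatrix R n)ᵀ} = ⊤ := by
  refine eq_top_iff.2 fun M _ => ?_
  rw [matrix_eq_sum_single M]
  refine Subalgebra.sum_mem _ fun i _ => Subalgebra.sum_mem _ fun j _ => ?_
  rw [← mul_one (M i j), ← smul_eq_mul, ← smul_single]
  exact Subalgebra.smul_mem _ (single_one_mem_adjoin_shiftMatrix i j) _

end Generation

def vanishingFrom (R : Type*) [Semiring R] (n m : ℕ) : Submodule R (Fin n → R) :=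
  ⨅ i ∈ {i : Fin n | m ≤ (i : ℕ)}, LinearMap.ker (LinearMap.proj i)

section Expansion
variable {R : Type*} {n : ℕ}

theorem mem_vanishingFrom [Semiring R] {m : ℕ} {v : Fin n → R} :
    v ∈ vanishingFrom R n m ↔ ∀ i : Fin n, m ≤ (i : ℕ) → v i = 0 := by
  simp [vanishingFrom, Submodule.mem_iInf]

theorem vanishingFrom_mono [Semiring R] : Monotone (vanishingFrom R n) :=
  fun _ _ hm _ hv => mem_vanishingFrom.2 fun i hi => mem_vanishingFrom.1 hv i (hm.trans hi)

theorem finrank_vanishingFrom [Ring R] [StrongRankCondition R] (m : ℕ) :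
    finrank R (vanishingFrom R n m) = min n m := by
  classical
  have e := LinearMap.iInfKerProjEquiv R (fun _ : Fin n => R)
    (I := {i | (i : ℕ) < m}) (J := {i | m ≤ (i : ℕ)})
    (Set.disjoint_left.2 fun _ (hi : _ < m) (hi' : m ≤ _) => not_le.2 hi hi')
    (fun i _ => lt_or_ge (i : ℕ) m)
  rw [vanishingFrom, e.finrank_eq, finrank_fintype_fun_eq_card, Fintype.card_subtype]
  exact Fin.card_filter_val_lt

theorem map_mulVecLin_vanishingFrom_le [CommSemiring R] (M : Matrix (Fin n) (Fin n) R)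
    {m m' : ℕ}
    (hM : ∀ i j : Fin n, m' ≤ (i : ℕ) → (j : ℕ) < m → M i j = 0) :
    (vanishingFrom R n m).map M.mulVecLin ≤ vanishingFrom R n m' := by
  rintro _ ⟨v, hv, rfl⟩
  refine mem_vanishingFrom.2 fun i hi => ?_
  rw [mulVecLin_apply, mulVec, dotProduct]
  refine Finset.sum_eq_zero fun j _ => ?_
  rcases lt_or_ge (j : ℕ) m with hj | hj
  · simp [hM i j hi hj]
  · simp [mem_vanishingFrom.1 hv j hj]

theorem map_shiftMatrix_vanishingFrom_le [CommSemiring R] (m : ℕ) :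
    (vanishingFrom R n m).map (shiftMatrix R n).mulVecLin ≤ vanishingFrom R n (m + 1) :=
  map_mulVecLin_vanishingFrom_le _ fun i j hi hj => if_neg (by omega)

theorem map_shiftMatrix_transpose_vanishingFrom_le [CommSemiring R] (m : ℕ) :
    (vanishingFrom R n m).map (shiftMatrix R n)ᵀ.mulVecLin ≤ vanishingFrom R n m :=
  map_mulVecLin_vanishingFrom_le _ fun i j hi hj => if_neg (by omega)

end Expansion

theorem generating_pair_with_small_expansion_general
    (F : Type*) [Field F] (n : ℕ) :
    ∃ (a b : Matrix (Fin n) (Fin n) F),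
      Algebra.adjoin F ({a, b} : Set (Matrix (Fin n) (Fin n) F)) = ⊤ ∧
      ∃ W : Submodule F (Fin n → F),
        finrank F W = n / 2 ∧
        finrank F ↥(W ⊔ W.map a.mulVecLin ⊔ W.map b.mulVecLin) ≤ finrank F W + 2 := by
  set W := vanishingFrom F n (n / 2)
  have hW : finrank F W = n / 2 := by rw [finrank_vanishingFrom]; omega
  refine ⟨_, _, adjoin_shiftMatrix_transpose_eq_top F n, W, hW, ?_⟩
  have hle : W ⊔ W.map (shiftMatrix F n).mulVecLin ⊔ W.map (shiftMatrix F n)ᵀ.mulVecLin ≤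
      vanishingFrom F n (n / 2 + 1) :=
    sup_le (sup_le (vanishingFrom_mono (Nat.le_succ _)) (map_shiftMatrix_vanishingFrom_le _))
      ((map_shiftMatrix_transpose_vanishingFrom_le _).trans (vanishingFrom_mono (Nat.le_succ _)))
  calc _ ≤ finrank F (vanishingFrom F n (n / 2 + 1)) := Submodule.finrank_mono hle
    _ ≤ n / 2 + 1 := by rw [finrank_vanishingFrom]; omega
    _ ≤ finrank F W + 2 := by omega

/-- For any field `F` and `n ≥ 2` there are matrices `a, b` generating `Mₙ(F)` as an
`F`-algebra and a subspace `W ⊆ Fⁿ` with `dim W = ⌊n/2⌋` and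
`dim(W + aW + bW) ≤ dim W + 2`. -/
theorem generating_pair_with_small_expansion
    (F : Type*) [Field F] (n : ℕ) (hn : 2 ≤ n) :
    ∃ (a b : Matrix (Fin n) (Fin n) F),
      Algebra.adjoin F ({a, b} : Set (Matrix (Fin n) (Fin n) F)) = ⊤ ∧
      ∃ W : Submodule F (Fin n → F),
        finrank F W = n / 2 ∧
        finrank F ↥(W ⊔ W.map a.mulVecLin ⊔ W.map b.mulVecLin) ≤ finrank F W + 2 :=
  generating_pair_with_small_expansion_general F n
end
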